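/- An n×n quaternionic matrix P is the Gramian Vᴴ·V of some V ∈ ℍ^{d×n} satisfying V·Vᴴ = I_d (i.e., of a normalised tight frame of n vectors for ℍ^d) if and only if P is an orthogonal projection matrix of rank d, i.e., Pᴴ = P, P² = P, and Re(trace(P)) = d. -/

import Mathlib

open Quaternion Matrix BigOperators

/-!
A Gramian `Vᴴ V` of a tight frame is Hermitian and idempotent, and its real trace equals that
of `V Vᴴ = I_d`, because `Re (a b) = Re (b a)` for quaternions. Conversely, a nonzero Hermitian
idempotent `P` has a diagonal entry `t > 0`, which is real, and the rescaled row `u = t^{-1/2} P_j`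
is a unit vector fixed by `P`. Removing the rank-one projection `u^* u` leaves a Hermitian
idempotent of real trace one less, whose frame `W` (by induction) is orthogonal to `u`;
prepending `u` to `W` gives the frame of `P`.
-/

namespace Quaternion

variable {R : Type*} [CommRing R]

theorem re_sum {ι : Type*} (s : Finset ι) (f : ι → ℍ[R]) :
    (∑ i ∈ s, f i).re = ∑ i ∈ s, (f i).re :=
  map_sum (QuaternionAlgebra.reₗ (-1) 0 (-1)) f s

theorem re_mul_comm (a b : ℍ[R]) : (a * b).re = (b * a).re := by
  simp only [re_mul]
  ring

end Quaternion

namespace Matrix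

section StarRing

variable {n α : Type*} [Ring α] [StarRing α]

theorem isHermitian_vecMulVec_star_self (u : n → α) : (vecMulVec (star u) u).IsHermitian := by
  rw [IsHermitian, conjTranspose_vecMulVec, star_star]

theorem conjTranspose_cons_mul_cons {d : ℕ} (u : n → α) (W : Matrix (Fin d) n α) :
    (of (vecCons u W))ᴴ * of (vecCons u W) = vecMulVec (star u) u + Wᴴ * W := by
  ext j k
  exact Fin.sum_univ_succ _

variable [Fintype n]

theorem isIdempotentElem_vecMulVec_star_self {u : n → α} (hu : u ⬝ᵥ star u = 1) :
    IsIdempotentElem (vecMulVec (star u) u) := by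
  rw [IsIdempotentElem, vecMulVec_mul_vecMulVec, hu, one_smul]

theorem isIdempotentElem_sub_vecMulVec_star_self {P : Matrix n n α} {u : n → α}
    (hH : P.IsHermitian) (hI : IsIdempotentElem P) (hu : u ⬝ᵥ star u = 1) (huP : u ᵥ* P = u) :
    IsIdempotentElem (P - vecMulVec (star u) u) := by
  have hPu : P *ᵥ star u = star u := by
    rw [← hH.eq, ← star_vecMul, huP]
  refine (isIdempotentElem_vecMulVec_star_self hu).sub hI ?_ ?_
  · rw [vecMulVec_mul, huP]
  · rw [mul_vecMulVec, hPu]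

theorem vecMul_sub_vecMulVec_star_self {P : Matrix n n α} {u : n → α}
    (hu : u ⬝ᵥ star u = 1) (huP : u ᵥ* P = u) : u ᵥ* (P - vecMulVec (star u) u) = 0 := by
  rw [vecMul_sub, vecMul_vecMulVec, hu, one_smul, huP, sub_self]

theorem cons_mul_conjTranspose_cons_eq_one {d : ℕ} {u : n → α} {W : Matrix (Fin d) n α}
    (hu : u ⬝ᵥ star u = 1) (hW : W * Wᴴ = 1) (huW : u ᵥ* (Wᴴ * W) = 0) :
    of (vecCons u W) * (of (vecCons u W))ᴴ = 1 := by
  have huW' : u ᵥ* Wᴴ = 0 := by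
    rw [← vecMul_one (u ᵥ* Wᴴ), ← hW, ← vecMul_vecMul, vecMul_vecMul u, huW, zero_vecMul]
  have hWu : W *ᵥ star u = 0 := by
    rw [← conjTranspose_conjTranspose W, ← star_vecMul, huW', star_zero]
  ext i i'
  induction i using Fin.cases <;> induction i' using Fin.cases
  · exact hu
  · exact congrFun huW' _
  · exact congrFun hWu _
  · simp only [one_apply, Fin.succ_inj]
    rw [← one_apply, ← hW]
    rfl

end StarRing

section Quaternion

variable {m n : Type*} [Fintype m] [Fintype n]

theorem trace_vecMulVec_star_self {R : Type*} [CommRing R] (u : n → ℍ[R]) :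
    (vecMulVec (star u) u).trace = u ⬝ᵥ star u := by
  rw [trace_vecMulVec]
  exact Finset.sum_congr rfl fun i _ => star_comm_self' (u i)

theorem re_trace_mul_comm {R : Type*} [CommRing R] (A : Matrix m n ℍ[R]) (B : Matrix n m ℍ[R]) :
    (A * B).trace.re = (B * A).trace.re := by
  simp only [trace, diag_apply, mul_apply, Quaternion.re_sum]
  rw [Finset.sum_comm]
  simp only [Quaternion.re_mul_comm]

theorem re_dotProduct_star_self (u : n → ℍ[ℝ]) : (u ⬝ᵥ star u).re = ∑ i, normSq (u i) := by
  simp only [dotProduct, Pi.star_apply, self_mul_star, Quaternion.re_sum, re_coe]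

theorem re_dotProduct_star_self_nonneg (u : n → ℍ[ℝ]) : 0 ≤ (u ⬝ᵥ star u).re := by
  rw [re_dotProduct_star_self]
  exact Finset.sum_nonneg fun i _ => normSq_nonneg

theorem re_dotProduct_star_self_eq_zero_iff {u : n → ℍ[ℝ]} : (u ⬝ᵥ star u).re = 0 ↔ u = 0 := by
  rw [re_dotProduct_star_self, Fintype.sum_eq_zero_iff_of_nonneg fun i => normSq_nonneg]
  simp only [funext_iff, Pi.zero_apply, normSq_eq_zero]

theorem re_trace_mul_conjTranspose_self_eq_zero_iff (A : Matrix m n ℍ[ℝ]) :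
    (A * Aᴴ).trace.re = 0 ↔ A = 0 := by
  have h : (A * Aᴴ).trace.re = ∑ i, (A i ⬝ᵥ star (A i)).re := Quaternion.re_sum _ _
  rw [h, Fintype.sum_eq_zero_iff_of_nonneg fun i => re_dotProduct_star_self_nonneg (A i),
    funext_iff]
  simp only [Pi.zero_apply, re_dotProduct_star_self_eq_zero_iff]
  exact funext_iff.symm

theorem exists_dotProduct_star_eq_one_vecMul_eq {P : Matrix n n ℍ[ℝ]} (hH : P.IsHermitian)
    (hI : IsIdempotentElem P) (h : 0 < P.trace.re) :
    ∃ u : n → ℍ[ℝ], u ⬝ᵥ star u = 1 ∧ u ᵥ* P = u := by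
  obtain ⟨j, -, hj⟩ : ∃ j ∈ Finset.univ, (0 : ℝ) < (P j j).re := by
    refine Finset.exists_lt_of_sum_lt (f := fun _ => 0) (g := fun j => (P j j).re) ?_
    simpa [trace, Quaternion.re_sum] using h
  set t := (P j j).re
  have hPjj : P j j = t := star_eq_self.mp (hH.apply j j)
  have hrow : P j ⬝ᵥ star (P j) = P j j := by
    conv_rhs => rw [← hI.eq]
    exact Finset.sum_congr rfl fun k _ => congrArg _ (hH.apply k j)
  refine ⟨(√t)⁻¹ • P j, ?_, ?_⟩
  · have hstar : star ((√t)⁻¹ • P j) = (√t)⁻¹ • star (P j) :=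
      funext fun k => Quaternion.star_smul _ _
    have ht : (√t)⁻¹ * ((√t)⁻¹ * t) = 1 := by
      field_simp
      exact (Real.sq_sqrt hj.le).symm
    rw [hstar, smul_dotProduct, dotProduct_smul, hrow, hPjj, smul_coe, smul_coe, ht, coe_one]
  · rw [smul_vecMul]
    exact congrArg _ (congrFun hI.eq j)

theorem exists_mul_conjTranspose_eq_one_of_re_trace_eq {P : Matrix n n ℍ[ℝ]} (d : ℕ)
    (hH : P.IsHermitian) (hI : IsIdempotentElem P) (hd : P.trace.re = d) :
    ∃ V : Matrix (Fin d) n ℍ[ℝ], V * Vᴴ = 1 ∧ P = Vᴴ * V := by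
  induction d generalizing P with
  | zero =>
    have hP : P = 0 := by
      rw [← re_trace_mul_conjTranspose_self_eq_zero_iff, hH.eq, hI.eq, hd, Nat.cast_zero]
    exact ⟨0, Subsingleton.elim _ _, by rw [hP, Matrix.mul_zero]⟩
  | succ d ih =>
    obtain ⟨u, hu, huP⟩ := exists_dotProduct_star_eq_one_vecMul_eq hH hI (by rw [hd]; positivity)
    have hQd : (P - vecMulVec (star u) u).trace.re = d := by
      rw [trace_sub, trace_vecMulVec_star_self, hu, re_sub, re_one, hd]
      push_cast
      ring
    obtain ⟨W, hW, hQ⟩ := ih (hH.sub (isHermitian_vecMulVec_star_self u))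
      (isIdempotentElem_sub_vecMulVec_star_self hH hI hu huP) hQd
    refine ⟨of (vecCons u W), cons_mul_conjTranspose_cons_eq_one hu hW ?_, ?_⟩
    · rw [← hQ, vecMul_sub_vecMulVec_star_self hu huP]
    · rw [conjTranspose_cons_mul_cons, ← hQ, add_sub_cancel]

end Quaternion

end Matrix

/-- An `n×n` quaternionic matrix `P` is the Gramian `Vᴴ V` of a normalised tight
frame of `n` vectors for `ℍ^d` (i.e. of some `V ∈ ℍ^{d×n}` with `V Vᴴ = I_d`)
if and only if `P` is an orthogonal projection matrix of rank `d`: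
`Pᴴ = P`, `P² = P` and `Re (trace P) = d`. -/
theorem gramian_iff_orthogonal_projection (d n : ℕ) (P : Matrix (Fin n) (Fin n) ℍ[ℝ]) :
    (∃ V : Matrix (Fin d) (Fin n) ℍ[ℝ], V * Vᴴ = 1 ∧ P = Vᴴ * V) ↔
      (Pᴴ = P ∧ P * P = P ∧ (P.trace).re = d) := by
  constructor
  · rintro ⟨V, hV, rfl⟩
    refine ⟨isHermitian_conjTranspose_mul_self V, ?_, ?_⟩
    · rw [Matrix.mul_assoc, ← Matrix.mul_assoc V, hV, Matrix.one_mul]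
    · rw [re_trace_mul_comm, hV, trace_one, Fintype.card_fin, re_natCast]
  · rintro ⟨hH, hI, hd⟩
    exact exists_mul_conjTranspose_eq_one_of_re_trace_eq d hH hI hd
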